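/- In the modified primal LP maximize bP_L - aP_G - π·F subject to P_G - P_L + F = 0, lb ≤ P_L ≤ ub, P_G, P_L, F ≥ 0, with 0 ≤ π < a and b > π: every optimal solution satisfies P_G = 0 and F = P_L = ub (assuming ub ≥ lb ≥ 0 and ub > 0). That is, when the price cap is below the marginal generation cost, all demand is served by flexibility rather than generation. -/
import Mathlib

/-- When the price cap π is below the marginal generation cost a and b > π,
every optimal solution serves all demand by flexibility: P_G = 0, F = P_L = ub. -/
theorem optimal_all_flexibility (a b lb ub pi PG PL F : ℝ)
    (hpi0 : 0 ≤ pi) (hpia : pi < a) (hbpi : b > pi)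
    (hlb : 0 ≤ lb) (hlbub : lb ≤ ub) (hub : 0 < ub)
    (hbal : PG - PL + F = 0) (hPLlb : lb ≤ PL) (hPLub : PL ≤ ub)
    (hPG : 0 ≤ PG) (hPL : 0 ≤ PL) (hF : 0 ≤ F)
    (hopt : ∀ PG' PL' F' : ℝ, PG' - PL' + F' = 0 → lb ≤ PL' → PL' ≤ ub →
      0 ≤ PG' → 0 ≤ PL' → 0 ≤ F' →
      b * PL' - a * PG' - pi * F' ≤ b * PL - a * PG - pi * F) :
    PG = 0 ∧ F = ub ∧ PL = ub := by
  have h := hopt 0 ub ub (by ring) hlbub le_rfl le_rfl (le_of_lt hub) (le_of_lt hub)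
  have hF' : F = PL - PG := by linarith
  have hPG0 : PG = 0 := by nlinarith
  have hPLub' : PL = ub := by nlinarith
  exact ⟨hPG0, by linarith, hPLub'⟩
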